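/- arXiv:1505.08094 — 2 statements merged into one kernel-verified Lean document; each statement's English description precedes it below -/
import Mathlib

section
/- Let p, q, r be distinct primes and let G be a non-abelian solvable group of order p · q · r. Then the intersection graph of subgroups I(G) contains a triangle, i.e., I(G) has a clique on 3 vertices. -/
open SimpleGraph

/-- The intersection graph of subgroups of a group `G`: vertices are the
nontrivial proper subgroups of `G`, and two distinct vertices are adjacent
iff the corresponding subgroups have nontrivial intersection. -/
def interGraph (G : Type*) [Group G] :
    SimpleGraph {H : Subgroup G // H ≠ ⊥ ∧ H ≠ ⊤} where
  Adj H K := H ≠ K ∧ H.1 ⊓ K.1 ≠ ⊥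
  symm := by
    refine ⟨?_⟩
    rintro H K ⟨hne, hint⟩
    exact ⟨hne.symm, by rwa [inf_comm] at hint⟩
  loopless := by
    refine ⟨?_⟩
    rintro H ⟨hne, _⟩
    exact hne rfl

/-!
A solvable group has a nontrivial abelian normal subgroup (a minimal normal subgroup is
abelian, its commutator subgroup being normal and strictly smaller), and a Sylow subgroup of
that is characteristic in it, hence normal in `G`. So `G` has a nontrivial normal `s`-subgroup
`N` for a prime `s`. The two primes `t ≠ u` among `p, q, r` other than `s` divide `|G ⧸ N|`,
which therefore has subgroups `A`, `B` of orders `t` and `u`; their preimages in `G` are two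
distinct proper subgroups strictly containing `N`, and together with `N` they form a triangle.
-/

section IntersectionGraph

variable {G : Type*} [Group G]

theorem interGraph_exists_isNClique_three_of_lt {N H K : Subgroup G} (hN : N ≠ ⊥)
    (hNH : N < H) (hNK : N < K) (hHK : H ≠ K) (hH : H ≠ ⊤) (hK : K ≠ ⊤) :
    ∃ s, (interGraph G).IsNClique 3 s := by
  classical
  refine ⟨{⟨N, hN, hNH.ne_top⟩, ⟨H, ne_bot_of_gt hNH, hH⟩, ⟨K, ne_bot_of_gt hNK, hK⟩},
    is3Clique_triple_iff.mpr ⟨?_, ?_, ?_⟩⟩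
  · exact ⟨Subtype.coe_ne_coe.mp hNH.ne, by rwa [inf_eq_left.mpr hNH.le]⟩
  · exact ⟨Subtype.coe_ne_coe.mp hNK.ne, by rwa [inf_eq_left.mpr hNK.le]⟩
  · exact ⟨Subtype.coe_ne_coe.mp hHK, ne_bot_of_le_ne_bot hN (le_inf hNH.le hNK.le)⟩

theorem interGraph_exists_isNClique_three_of_quotient {N : Subgroup G} [N.Normal] (hN : N ≠ ⊥)
    {A B : Subgroup (G ⧸ N)} (hA : A ≠ ⊥) (hB : B ≠ ⊥) (hAB : A ≠ B) (hA' : A ≠ ⊤)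
    (hB' : B ≠ ⊤) : ∃ s, (interGraph G).IsNClique 3 s := by
  have hsurj := QuotientGroup.mk'_surjective N
  have hinj := Subgroup.comap_injective hsurj
  have hker : (⊥ : Subgroup (G ⧸ N)).comap (QuotientGroup.mk' N) = N := by
    rw [MonoidHom.comap_bot, QuotientGroup.ker_mk']
  have hlt {C : Subgroup (G ⧸ N)} (hC : C ≠ ⊥) : N < C.comap (QuotientGroup.mk' N) :=
    hker.symm.trans_lt <|
      (Subgroup.comap_lt_comap_of_surjective hsurj).mpr (bot_lt_iff_ne_bot.mpr hC)
  have hne_top {C : Subgroup (G ⧸ N)} (hC : C ≠ ⊤) : C.comap (QuotientGroup.mk' N) ≠ ⊤ := by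
    rwa [← Subgroup.comap_top (QuotientGroup.mk' N), hinj.ne_iff]
  exact interGraph_exists_isNClique_three_of_lt hN (hlt hA) (hlt hB) (hinj.ne hAB)
    (hne_top hA') (hne_top hB')

end IntersectionGraph

section

variable {G : Type*} [Group G] [Finite G]

theorem exists_two_ne_bot_ne_top_subgroups_of_prime_dvd_card {t u : ℕ} (ht : t.Prime)
    (hu : u.Prime) (htu : t ≠ u) (htG : t ∣ Nat.card G) (huG : u ∣ Nat.card G) :
    ∃ A B : Subgroup G, A ≠ ⊥ ∧ B ≠ ⊥ ∧ A ≠ B ∧ A ≠ ⊤ ∧ B ≠ ⊤ := by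
  have hsub {v : ℕ} (hv : v.Prime) (hvG : v ∣ Nat.card G) :
      ∃ A : Subgroup G, Nat.card A = v := by
    have := Fact.mk hv
    simpa using Sylow.exists_subgroup_card_pow_prime v (n := 1) (by simpa using hvG)
  obtain ⟨A, hA⟩ := hsub ht htG
  obtain ⟨B, hB⟩ := hsub hu huG
  refine ⟨A, B, ?_, ?_, ?_, ?_, ?_⟩
  · exact fun h => ht.ne_one (hA ▸ Subgroup.card_eq_one.mpr h)
  · exact fun h => hu.ne_one (hB ▸ Subgroup.card_eq_one.mpr h)
  · rintro rfl; exact htu (hA.symm.trans hB)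
  · rintro rfl
    rw [Subgroup.card_top] at hA
    exact htu ((Nat.prime_dvd_prime_iff_eq hu ht).mp (hA ▸ huG)).symm
  · rintro rfl
    rw [Subgroup.card_top] at hB
    exact htu ((Nat.prime_dvd_prime_iff_eq ht hu).mp (hB ▸ htG))

theorem IsPGroup.prime_dvd_card_quotient_of_ne {s t : ℕ} (hs : s.Prime) (ht : t.Prime)
    (hts : t ≠ s) {N : Subgroup G} [N.Normal] (hN : IsPGroup s N) (htG : t ∣ Nat.card G) :
    t ∣ Nat.card (G ⧸ N) := by
  have := Fact.mk hs
  obtain ⟨k, hk⟩ := IsPGroup.iff_card.mp hN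
  rw [Subgroup.card_eq_card_quotient_mul_card_subgroup N, hk] at htG
  exact (Nat.Coprime.pow_right k ((Nat.coprime_primes ht hs).mpr hts)).dvd_of_dvd_mul_right htG

theorem exists_normal_isPGroup_ne_bot_of_commutator_eq_bot {M : Subgroup G} [M.Normal]
    (hM : M ≠ ⊥) (hMM : ⁅M, M⁆ = ⊥) :
    ∃ s, s.Prime ∧ ∃ N : Subgroup G, N.Normal ∧ N ≠ ⊥ ∧ IsPGroup s N := by
  have := Subgroup.commutator_self_eq_bot_iff.mp hMM
  have hs : (Nat.card M).minFac.Prime :=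
    Nat.minFac_prime ((Subgroup.one_lt_card_iff_ne_bot M).mpr hM).ne'
  have := Fact.mk hs
  let P : Sylow (Nat.card M).minFac M := default
  have := P.characteristic_of_normal inferInstance
  refine ⟨_, hs, (P : Subgroup M).map M.subtype, inferInstance, ?_, P.isPGroup'.map _⟩
  rw [Ne, Subgroup.map_eq_bot_iff_of_injective _ M.subtype_injective]
  exact P.ne_bot_of_dvd_card (Nat.minFac_dvd _)

theorem exists_normal_ne_bot_commutator_eq_bot [Group.IsSolvable G] [Nontrivial G] :
    ∃ M : Subgroup G, M.Normal ∧ M ≠ ⊥ ∧ ⁅M, M⁆ = ⊥ := by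
  obtain ⟨M, ⟨hMn, hM⟩, hmin⟩ := wellFounded_lt.has_min {H : Subgroup G | H.Normal ∧ H ≠ ⊥}
    ⟨⊤, Subgroup.normal_top, top_ne_bot⟩
  exact ⟨M, hMn, hM, by_contra fun h =>
    hmin _ ⟨Subgroup.commutator_normal M M, h⟩ (Group.IsSolvable.commutator_lt_of_ne_bot hM)⟩

end

theorem intersectionGraph_has_triangle_of_nonabelian_solvable_pqr_general
    (p q r : ℕ) (hp : p.Prime) (hq : q.Prime) (hr : r.Prime)
    (hpq : p ≠ q) (hpr : p ≠ r) (hqr : q ≠ r)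
    (G : Type*) [Group G] [Group.IsSolvable G] (hcard : Nat.card G = p * q * r) :
    ∃ s, (interGraph G).IsNClique 3 s := by
  have hG : 1 < Nat.card G := by
    have := Nat.mul_le_mul (Nat.mul_le_mul hp.two_le hq.two_le) hr.two_le
    omega
  have : Finite G := Nat.finite_of_card_ne_zero (by omega)
  have : Nontrivial G := Finite.one_lt_card_iff_nontrivial.mp hG
  obtain ⟨M, _, hM, hMM⟩ := exists_normal_ne_bot_commutator_eq_bot (G := G)
  obtain ⟨s, hs, N, _, hN, hNs⟩ := exists_normal_isPGroup_ne_bot_of_commutator_eq_bot hM hMM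
  obtain ⟨t, u, ht, hu, htu, hts, hus, htG, huG⟩ : ∃ t u, t.Prime ∧ u.Prime ∧ t ≠ u ∧ t ≠ s ∧
      u ≠ s ∧ t ∣ Nat.card G ∧ u ∣ Nat.card G := by
    rw [hcard]
    rcases eq_or_ne p s with rfl | hps
    · exact ⟨q, r, hq, hr, hqr, hpq.symm, hpr.symm, (dvd_mul_left q p).mul_right r,
        dvd_mul_left r _⟩
    rcases eq_or_ne q s with rfl | hqs
    · exact ⟨p, r, hp, hr, hpr, hps, hqr.symm, (dvd_mul_right p q).mul_right r,
        dvd_mul_left r _⟩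
    · exact ⟨p, q, hp, hq, hpq, hps, hqs, (dvd_mul_right p q).mul_right r,
        (dvd_mul_left q p).mul_right r⟩
  obtain ⟨A, B, hA, hB, hAB, hA', hB'⟩ :=
    exists_two_ne_bot_ne_top_subgroups_of_prime_dvd_card ht hu htu
      (hNs.prime_dvd_card_quotient_of_ne hs ht hts htG)
      (hNs.prime_dvd_card_quotient_of_ne hs hu hus huG)
  exact interGraph_exists_isNClique_three_of_quotient hN hA hB hAB hA' hB'

theorem intersectionGraph_has_triangle_of_nonabelian_solvable_pqr
    (p q r : ℕ) (hp : p.Prime) (hq : q.Prime) (hr : r.Prime)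
    (hpq : p ≠ q) (hpr : p ≠ r) (hqr : q ≠ r)
    (G : Type*) [Group G] [Group.IsSolvable G] (hcard : Nat.card G = p * q * r)
    (hna : ¬ ∀ a b : G, a * b = b * a) :
    ∃ s, (interGraph G).IsNClique 3 s :=
  intersectionGraph_has_triangle_of_nonabelian_solvable_pqr_general p q r hp hq hr hpq hpr hqr G
    hcard
end

section
/- Let G be a finite solvable group whose order has more than three distinct prime factors (i.e., the order of G is divisible by at least four distinct primes). Then the intersection graph of subgroups I(G) contains K_5 as a subgraph, i.e., I(G) has a clique on 5 vertices. -/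
open SimpleGraph

section Aux

variable {G₀ : Type*} [Group G₀] [Finite G₀]

/-- If `K` is normal, the order of `H ⊔ K` divides `|H| * |K|`. -/
lemma aux_card_sup_dvd (H K : Subgroup G₀) [K.Normal] :
    Nat.card ↥(H ⊔ K) ∣ Nat.card H * Nat.card K := by
  rw [Subgroup.card_eq_card_quotient_mul_card_subgroup (K.subgroupOf (H ⊔ K))]
  apply Nat.mul_dvd_mul
  · have h2 : Nat.card (↥(H ⊔ K) ⧸ K.subgroupOf (H ⊔ K)) = K.relIndex H := by
      rw [← Subgroup.relIndex_sup_right]; rfl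
    rw [h2]
    exact Subgroup.index_dvd_card _
  · exact dvd_of_eq (Nat.card_congr (Subgroup.subgroupOfEquivOfLe le_sup_right).toEquiv)

open scoped commutatorElement in
/-- Every nontrivial finite solvable group has a nontrivial normal subgroup of
prime power order. -/
lemma aux_exists_primary [Nontrivial G₀] [Group.IsSolvable G₀] :
    ∃ (t : ℕ) (M : Subgroup G₀), t.Prime ∧ M.Normal ∧ M ≠ ⊥ ∧
      ∃ n, Nat.card M = t ^ n := by
  classical
  have hP : ∃ n, derivedSeries G₀ n = ⊥ := Group.IsSolvable.solvable
  have hfind : derivedSeries G₀ (Nat.find hP) = ⊥ := Nat.find_spec hP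
  have hn0 : Nat.find hP ≠ 0 := by
    intro h0
    rw [h0, derivedSeries_zero] at hfind
    exact top_ne_bot hfind
  set A := derivedSeries G₀ (Nat.find hP - 1) with hAdef
  have hAne : A ≠ ⊥ := Nat.find_min hP (Nat.pred_lt hn0)
  have hAnorm : A.Normal := derivedSeries_normal G₀ _
  have hcomm : ∀ a ∈ A, ∀ b ∈ A, a * b = b * a := by
    intro a ha b hb
    have hmem : ⁅a, b⁆ ∈ ⁅A, A⁆ := Subgroup.commutator_mem_commutator ha hb
    rw [← derivedSeries_succ, Nat.sub_add_cancel (Nat.one_le_iff_ne_zero.mpr hn0),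
      hfind, Subgroup.mem_bot] at hmem
    exact commutatorElement_eq_one_iff_mul_comm.mp hmem
  have hcardA : Nat.card A ≠ 1 := fun h1 => hAne (by rw [Subgroup.eq_bot_iff_card]; exact h1)
  set t := (Nat.card A).minFac with htdef
  have htp : t.Prime := Nat.minFac_prime hcardA
  haveI : Fact t.Prime := ⟨htp⟩
  obtain ⟨g, hg⟩ := exists_prime_orderOf_dvd_card' (G := A) t (Nat.minFac_dvd _)
  let M : Subgroup G₀ :=
    { carrier := {x | x ∈ A ∧ ∃ k, x ^ t ^ k = 1}
      one_mem' := ⟨A.one_mem, 0, one_pow _⟩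
      mul_mem' := by
        rintro a b ⟨ha, k, hk⟩ ⟨hb, l, hl⟩
        refine ⟨A.mul_mem ha hb, k + l, ?_⟩
        have hc : Commute a b := hcomm a ha b hb
        rw [hc.mul_pow, pow_add, pow_mul, hk, one_pow, one_mul,
          mul_comm (t ^ k) (t ^ l), pow_mul, hl, one_pow]
      inv_mem' := by
        rintro a ⟨ha, k, hk⟩
        exact ⟨A.inv_mem ha, k, by rw [inv_pow, hk, inv_one]⟩ }
  have hMnorm : M.Normal := by
    constructor
    intro x hx c
    obtain ⟨hxA, k, hk⟩ := hx
    refine ⟨hAnorm.conj_mem x hxA c, k, ?_⟩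
    rw [conj_pow, hk, mul_one, mul_inv_cancel]
  refine ⟨t, M, htp, hMnorm, ?_, ?_⟩
  · intro hMbot
    have hgM : (g : G₀) ∈ M := by
      refine ⟨g.2, 1, ?_⟩
      rw [pow_one]
      have h2 := pow_orderOf_eq_one g
      rw [hg] at h2
      exact_mod_cast congrArg (Subtype.val) h2
    rw [hMbot, Subgroup.mem_bot] at hgM
    have hg1 : g = 1 := Subtype.ext hgM
    rw [hg1, orderOf_one] at hg
    exact htp.one_lt.ne' hg.symm
  · have hpg : IsPGroup t M := by
      intro x
      obtain ⟨k, hk⟩ := x.2.2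
      exact ⟨k, Subtype.ext (by rw [SubmonoidClass.coe_pow]; exact hk)⟩
    exact (IsPGroup.iff_card).mp hpg

end Aux

theorem intersectionGraph_has_K5_of_solvable_four_primes
    (G : Type*) [Group G] [Finite G] [Group.IsSolvable G]
    (h : 3 < (Nat.card G).primeFactors.card) :
    ∃ s, (interGraph G).IsNClique 5 s := by
  classical
  have herase : ∀ (s : Finset ℕ) (a : ℕ), s.card ≤ (s.erase a).card + 1 := by
    intro s a
    by_cases hmem : a ∈ s
    · rw [Finset.card_erase_add_one hmem]
    · rw [Finset.erase_eq_of_notMem hmem]; omega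
  have hcard0 : Nat.card G ≠ 0 := Nat.card_pos.ne'
  have hG1 : Nat.card G ≠ 1 := by
    intro h1; rw [h1] at h; simp at h
  haveI : Nontrivial G := Finite.one_lt_card_iff_nontrivial.mp (by omega)
  obtain ⟨t, N, htp, hNnorm, hNbot, n, hNcard⟩ := aux_exists_primary (G₀ := G)
  haveI := hNnorm
  set K := G ⧸ N with hKdef
  have hGKN : Nat.card G = Nat.card K * Nat.card N :=
    Subgroup.card_eq_card_quotient_mul_card_subgroup N
  have hNprime : ∀ q : ℕ, q.Prime → q ∣ Nat.card N → q = t := by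
    intro q hq hdvd
    rw [hNcard] at hdvd
    exact (Nat.prime_dvd_prime_iff_eq hq htp).mp (hq.dvd_of_dvd_pow hdvd)
  have hdvdK : ∀ q : ℕ, q.Prime → q ∣ Nat.card G → q ≠ t → q ∣ Nat.card K := by
    intro q hq hdvd hne
    rw [hGKN] at hdvd
    rcases (Nat.Prime.dvd_mul hq).mp hdvd with h' | h'
    · exact h'
    · exact absurd (hNprime q hq h') hne
  -- K is nontrivial
  haveI hKnt : Nontrivial K := by
    have h3 : 0 < ((Nat.card G).primeFactors.erase t).card := by
      have h4 := herase (Nat.card G).primeFactors t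
      omega
    obtain ⟨q0, hq0⟩ := Finset.card_pos.mp h3
    have hq0t : q0 ≠ t := Finset.ne_of_mem_erase hq0
    have hq0mem := Finset.mem_of_mem_erase hq0
    have hq0p : q0.Prime := Nat.prime_of_mem_primeFactors hq0mem
    have hq0K : q0 ∣ Nat.card K :=
      hdvdK q0 hq0p (Nat.dvd_of_mem_primeFactors hq0mem) hq0t
    have hne1 : Nat.card K ≠ 1 := by
      intro h1; rw [h1, Nat.dvd_one] at hq0K; exact hq0p.one_lt.ne' hq0K
    have hlt : 1 < Nat.card K := by
      have := Nat.card_pos (α := K); omega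
    exact Finite.one_lt_card_iff_nontrivial.mp hlt
  obtain ⟨t', N', ht'p, hN'norm, hN'bot, m, hN'card⟩ := aux_exists_primary (G₀ := K)
  haveI := hN'norm
  have hN'prime : ∀ q : ℕ, q.Prime → q ∣ Nat.card N' → q = t' := by
    intro q hq hdvd
    rw [hN'card] at hdvd
    exact (Nat.prime_dvd_prime_iff_eq hq ht'p).mp (hq.dvd_of_dvd_pow hdvd)
  have hN'1 : Nat.card N' ≠ 1 := fun h1 => hN'bot (by rw [Subgroup.eq_bot_iff_card]; exact h1)
  have ht'N' : t' ∣ Nat.card N' := by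
    rcases m with _ | m'
    · rw [hN'card] at hN'1; simp at hN'1
    · rw [hN'card]; exact dvd_pow_self t' (Nat.succ_ne_zero m')
  -- choose primes u ≠ v, both different from t and t'
  set s0 := (((Nat.card G).primeFactors.erase t).erase t') with hs0
  have hs0card : 2 ≤ s0.card := by
    have h1 := herase (Nat.card G).primeFactors t
    have h2 := herase ((Nat.card G).primeFactors.erase t) t'
    rw [← hs0] at h2
    omega
  obtain ⟨u, hu⟩ := Finset.card_pos.mp (show 0 < s0.card by omega)
  obtain ⟨v, hv⟩ := Finset.card_pos.mp
    (show 0 < (s0.erase u).card by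
      have := herase s0 u; omega)
  have hvu : v ≠ u := Finset.ne_of_mem_erase hv
  have hvs0 : v ∈ s0 := Finset.mem_of_mem_erase hv
  have hut' : u ≠ t' := Finset.ne_of_mem_erase hu
  have hvt' : v ≠ t' := Finset.ne_of_mem_erase hvs0
  have hut : u ≠ t := Finset.ne_of_mem_erase (Finset.mem_of_mem_erase hu)
  have hvt : v ≠ t := Finset.ne_of_mem_erase (Finset.mem_of_mem_erase hvs0)
  have humem := Finset.mem_of_mem_erase (Finset.mem_of_mem_erase hu)
  have hvmem := Finset.mem_of_mem_erase (Finset.mem_of_mem_erase hvs0)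
  have hup : u.Prime := Nat.prime_of_mem_primeFactors humem
  have hvp : v.Prime := Nat.prime_of_mem_primeFactors hvmem
  have huK : u ∣ Nat.card K := hdvdK u hup (Nat.dvd_of_mem_primeFactors humem) hut
  have hvK : v ∣ Nat.card K := hdvdK v hvp (Nat.dvd_of_mem_primeFactors hvmem) hvt
  haveI : Fact u.Prime := ⟨hup⟩
  haveI : Fact v.Prime := ⟨hvp⟩
  obtain ⟨xu, hxu⟩ := exists_prime_orderOf_dvd_card' (G := K) u huK
  obtain ⟨xv, hxv⟩ := exists_prime_orderOf_dvd_card' (G := K) v hvK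
  set Su := Subgroup.zpowers xu with hSudef
  set Sv := Subgroup.zpowers xv with hSvdef
  have hcSu : Nat.card Su = u := by rw [hSudef, Nat.card_zpowers, hxu]
  have hcSv : Nat.card Sv = v := by rw [hSvdef, Nat.card_zpowers, hxv]
  set W := Su ⊔ N' with hWdef
  have hWdvd : Nat.card W ∣ Nat.card Su * Nat.card N' := aux_card_sup_dvd Su N'
  have huW : u ∣ Nat.card W := hcSu ▸ Subgroup.card_dvd_of_le le_sup_left
  have ht'W : t' ∣ Nat.card W := ht'N'.trans (Subgroup.card_dvd_of_le le_sup_right)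
  have hWprimes : ∀ q : ℕ, q.Prime → q ∣ Nat.card W → q = u ∨ q = t' := by
    intro q hq hd
    rcases hq.dvd_mul.mp (hd.trans hWdvd) with h' | h'
    · left
      rw [hcSu] at h'
      exact (Nat.prime_dvd_prime_iff_eq hq hup).mp h'
    · right; exact hN'prime q hq h'
  -- non-divisibility facts
  have hprime_ne : ∀ p q : ℕ, p.Prime → q.Prime → p ≠ q → ¬ p ∣ q := by
    intro p q hp hq hne hd
    exact hne ((Nat.prime_dvd_prime_iff_eq hp hq).mp hd)
  have hvW : ¬ v ∣ Nat.card W := by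
    intro hd
    rcases hWprimes v hvp hd with h' | h'
    · exact hvu h'
    · exact hvt' h'
  have huN' : ¬ u ∣ Nat.card N' := fun hd => hut' (hN'prime u hup hd)
  have hvSu : ¬ v ∣ Nat.card Su := by rw [hcSu]; exact hprime_ne v u hvp hup hvu
  have huSv : ¬ u ∣ Nat.card Sv := by
    rw [hcSv]; exact hprime_ne u v hup hvp (fun h' => hvu h'.symm)
  have ht'Su : ¬ t' ∣ Nat.card Su := by
    rw [hcSu]; exact hprime_ne t' u ht'p hup (fun h' => hut' h'.symm)
  have hubot : ¬ u ∣ Nat.card (⊥ : Subgroup K) := by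
    rw [Subgroup.card_bot, Nat.dvd_one]; exact hup.one_lt.ne'
  have hcTop : Nat.card (⊤ : Subgroup K) = Nat.card K := Subgroup.card_top
  -- the generic distinctness helper
  have hne : ∀ (X Y : Subgroup K) (q : ℕ), q ∣ Nat.card X → ¬ q ∣ Nat.card Y → X ≠ Y :=
    fun X Y q h1 h2 hXY => h2 (hXY ▸ h1)
  -- distinctness downstairs
  have d12 : (⊥ : Subgroup K) ≠ N' := fun h' => hN'bot h'.symm
  have d13 : (⊥ : Subgroup K) ≠ Su := (hne Su ⊥ u (hcSu ▸ dvd_rfl) hubot).symm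
  have d14 : (⊥ : Subgroup K) ≠ Sv := (hne Sv ⊥ v (hcSv ▸ dvd_rfl)
    (by rw [Subgroup.card_bot, Nat.dvd_one]; exact hvp.one_lt.ne')).symm
  have d15 : (⊥ : Subgroup K) ≠ W := (hne W ⊥ u huW hubot).symm
  have d23 : N' ≠ Su := hne N' Su t' ht'N' ht'Su
  have d24 : N' ≠ Sv := hne N' Sv t' ht'N'
    (by rw [hcSv]; exact hprime_ne t' v ht'p hvp (fun h' => hvt' h'.symm))
  have d25 : N' ≠ W := (hne W N' u huW huN').symm
  have d34 : Su ≠ Sv := hne Su Sv u (hcSu ▸ dvd_rfl) huSv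
  have d35 : Su ≠ W := (hne W Su t' ht'W ht'Su).symm
  have d45 : Sv ≠ W := (hne W Sv u huW huSv).symm
  -- properness downstairs
  have nt1 : (⊥ : Subgroup K) ≠ ⊤ := (hne ⊤ ⊥ u (hcTop ▸ huK) hubot).symm
  have nt2 : N' ≠ ⊤ := (hne ⊤ N' u (hcTop ▸ huK) huN').symm
  have nt3 : Su ≠ ⊤ := (hne ⊤ Su v (hcTop ▸ hvK) hvSu).symm
  have nt4 : Sv ≠ ⊤ := (hne ⊤ Sv u (hcTop ▸ huK) huSv).symm
  have nt5 : W ≠ ⊤ := (hne ⊤ W v (hcTop ▸ hvK) hvW).symm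
  -- pull everything back to G
  set π := QuotientGroup.mk' N with hπdef
  have hπsurj : Function.Surjective π := QuotientGroup.mk'_surjective N
  have hinj : Function.Injective (Subgroup.comap π) := Subgroup.comap_injective hπsurj
  have hNle : ∀ C : Subgroup K, N ≤ Subgroup.comap π C := by
    intro C x hx
    have hx1 : π x = 1 := (QuotientGroup.eq_one_iff x).mpr hx
    show π x ∈ C
    rw [hx1]; exact C.one_mem
  have hVbot : ∀ C : Subgroup K, Subgroup.comap π C ≠ ⊥ := by
    intro C hbot
    exact hNbot (le_bot_iff.mp (hbot ▸ hNle C))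
  have hVtop : ∀ C : Subgroup K, C ≠ ⊤ → Subgroup.comap π C ≠ ⊤ := by
    intro C hC htop
    exact hC (hinj (htop.trans (Subgroup.comap_top π).symm))
  let V : Type _ := {H : Subgroup G // H ≠ ⊥ ∧ H ≠ ⊤}
  let mk : ∀ (C : Subgroup K), C ≠ ⊤ → V := fun C hC =>
    ⟨Subgroup.comap π C, hVbot C, hVtop C hC⟩
  let v1 : V := mk ⊥ nt1
  let v2 : V := mk N' nt2
  let v3 : V := mk Su nt3
  let v4 : V := mk Sv nt4
  let v5 : V := mk W nt5
  have vne : ∀ (C C' : Subgroup K) (hC : C ≠ ⊤) (hC' : C' ≠ ⊤), C ≠ C' →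
      mk C hC ≠ mk C' hC' := by
    intro C C' hC hC' hCC' heq
    exact hCC' (hinj (congrArg Subtype.val heq))
  refine ⟨{v1, v2, v3, v4, v5}, ?_, ?_⟩
  · -- clique
    intro a ha b hb hab
    have key : ∀ c : V, c ∈ ({v1, v2, v3, v4, v5} : Finset V) → N ≤ c.1 := by
      intro c hc
      simp only [Finset.mem_insert, Finset.mem_singleton] at hc
      rcases hc with rfl | rfl | rfl | rfl | rfl <;> exact hNle _
    rw [Finset.mem_coe] at ha hb
    refine ⟨hab, ?_⟩
    intro hinf
    exact hNbot (le_bot_iff.mp (hinf ▸ le_inf (key a ha) (key b hb)))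
  · -- card
    have e12 := vne _ _ nt1 nt2 d12
    have e13 := vne _ _ nt1 nt3 d13
    have e14 := vne _ _ nt1 nt4 d14
    have e15 := vne _ _ nt1 nt5 d15
    have e23 := vne _ _ nt2 nt3 d23
    have e24 := vne _ _ nt2 nt4 d24
    have e25 := vne _ _ nt2 nt5 d25
    have e34 := vne _ _ nt3 nt4 d34
    have e35 := vne _ _ nt3 nt5 d35
    have e45 := vne _ _ nt4 nt5 d45
    rw [Finset.card_insert_of_notMem (by simp [e12, e13, e14, e15]; exact ⟨e12, e13, e14, e15⟩),
      Finset.card_insert_of_notMem (by simp [e23, e24, e25]; exact ⟨e23, e24, e25⟩),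
      Finset.card_insert_of_notMem (by simp [e34, e35]; exact ⟨e34, e35⟩),
      Finset.card_insert_of_notMem (by simp [e45]; exact e45),
      Finset.card_singleton]
end
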